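/- Let (λ, u) be an exact eigenpair of A and let i ∈ {1,…,m} be such that δ_i := min_{j≠i, 1≤j≤m} |μ̃_j − μ| > 0, where μ = 1/λ. Let E_m^{(i)} be the A-orthogonal projection onto span{ũ_i}. Then ‖u − E_m^{(i)} u‖₂ ≤ (1 + μ̃_1/δ_i) η_K · ‖u − E_m^{(i)} u‖_A. -/

import Mathlib

open Matrix

/-- The Euclidean (`L²`) norm on `ℝⁿ`: `‖x‖₂ = √(xᵀx)`. -/
noncomputable def l2N {n : ℕ} (x : Fin n → ℝ) : ℝ := Real.sqrt (x ⬝ᵥ x)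

/-- The energy norm induced by the matrix `A`: `‖x‖_A = √(xᵀAx)`. -/
noncomputable def aN {n : ℕ} (A : Matrix (Fin n) (Fin n) ℝ) (x : Fin n → ℝ) : ℝ :=
  Real.sqrt (x ⬝ᵥ (A *ᵥ x))

/-- `η_K = sup_{‖g‖₂ = 1} ‖(I - P_K) A⁻¹ g‖_A`, where `P` is the `A`-orthogonal
projection onto the subspace `K`. -/
noncomputable def etaK {n : ℕ} (A : Matrix (Fin n) (Fin n) ℝ)
    (P : (Fin n → ℝ) →ₗ[ℝ] (Fin n → ℝ)) : ℝ :=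
  sSup ((fun g => aN A ((A⁻¹ *ᵥ g) - P (A⁻¹ *ᵥ g))) '' {g | l2N g = 1})

/-!
Write `e = u - E u`. Galerkin orthogonality splits `‖e‖₂² = (e, e - P e) + (e, P e)`, and expanding
`P e` in the `A`-orthonormal Ritz basis gives `(e, P e) = ∑ⱼ (e, ũⱼ)_A (e, ũⱼ)`. The term `j = i`
vanishes, and for `j ≠ i` the eigen-equation gives `(e - P e, ũⱼ) = (μ - μ̃ⱼ) (e, ũⱼ)_A`, so the gap
`δ_i` bounds each energy coefficient by an `L²` coefficient of `e - P e`. The Ritz vectors are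
`L²`-orthogonal with `‖ũⱼ‖₂² = μ̃ⱼ ≤ μ̃₁`, so Cauchy–Schwarz and Bessel give
`‖e‖₂ ≤ (1 + μ̃₁/δ_i) ‖e - P e‖₂`, and Aubin–Nitsche duality gives `‖e - P e‖₂ ≤ η_K ‖e‖_A`.
-/

lemma le_of_sq_le_mul {α : Type*} [CommRing α] [LinearOrder α] [IsStrictOrderedRing α] {a b : α}
    (hb : 0 ≤ b) (h : a ^ 2 ≤ a * b) : a ≤ b := by
  nlinarith

namespace Matrix

lemma IsHermitian.dotProduct_mulVec_comm {ι R : Type*} [Fintype ι] [CommSemiring R] [StarRing R]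
    [TrivialStar R] {A : Matrix ι ι R} (hA : A.IsHermitian) (x y : ι → R) :
    x ⬝ᵥ (A *ᵥ y) = y ⬝ᵥ (A *ᵥ x) := by
  rw [dotProduct_mulVec, ← mulVec_transpose, ← conjTranspose_eq_transpose_of_trivial, hA.eq,
    dotProduct_comm]

end Matrix

section Norms

variable {n : ℕ}

lemma l2N_eq_norm (x : Fin n → ℝ) : l2N x = ‖WithLp.toLp 2 x‖ := by
  simp [l2N, EuclideanSpace.norm_eq, dotProduct, sq]

lemma l2N_nonneg (x : Fin n → ℝ) : 0 ≤ l2N x := Real.sqrt_nonneg _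

lemma aN_nonneg (A : Matrix (Fin n) (Fin n) ℝ) (x : Fin n → ℝ) : 0 ≤ aN A x := Real.sqrt_nonneg _

lemma l2N_sq (x : Fin n → ℝ) : l2N x ^ 2 = x ⬝ᵥ x :=
  Real.sq_sqrt (by simpa using dotProduct_star_self_nonneg x)

lemma aN_sq {A : Matrix (Fin n) (Fin n) ℝ} (hA : A.PosSemidef) (x : Fin n → ℝ) :
    aN A x ^ 2 = x ⬝ᵥ (A *ᵥ x) :=
  Real.sq_sqrt (by simpa using hA.dotProduct_mulVec_nonneg x)

lemma aN_smul (A : Matrix (Fin n) (Fin n) ℝ) (s : ℝ) (x : Fin n → ℝ) :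
    aN A (s • x) = |s| * aN A x := by
  rw [aN, aN, mulVec_smul, dotProduct_smul, smul_dotProduct, smul_eq_mul, smul_eq_mul,
    ← mul_assoc, ← sq, Real.sqrt_mul (sq_nonneg s), Real.sqrt_sq_eq_abs]

lemma abs_dotProduct_mulVec_le {A : Matrix (Fin n) (Fin n) ℝ} (hA : A.PosSemidef)
    (x y : Fin n → ℝ) : |x ⬝ᵥ (A *ᵥ y)| ≤ aN A x * aN A y := by
  have hdisc : discrim (y ⬝ᵥ (A *ᵥ y)) (2 * (x ⬝ᵥ (A *ᵥ y))) (x ⬝ᵥ (A *ᵥ x)) ≤ 0 := by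
    refine discrim_le_zero fun t => ?_
    have h := hA.dotProduct_mulVec_nonneg (x + t • y)
    simp only [star_trivial, mulVec_add, mulVec_smul, dotProduct_add, add_dotProduct,
      dotProduct_smul, smul_dotProduct, smul_eq_mul, hA.1.dotProduct_mulVec_comm y x] at h
    linarith
  rw [aN, aN, ← Real.sqrt_mul (by simpa using hA.dotProduct_mulVec_nonneg x)]
  exact Real.abs_le_sqrt (by rw [discrim] at hdisc; linarith)

lemma abs_dotProduct_le (x y : Fin n → ℝ) : |x ⬝ᵥ y| ≤ l2N x * l2N y := by
  simpa [aN, l2N] using abs_dotProduct_mulVec_le PosSemidef.one x y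

end Norms

section Eta

variable {n : ℕ} (A : Matrix (Fin n) (Fin n) ℝ) (P : (Fin n → ℝ) →ₗ[ℝ] (Fin n → ℝ))

lemma bddAbove_etaK_image :
    BddAbove ((fun g => aN A ((A⁻¹ *ᵥ g) - P (A⁻¹ *ᵥ g))) '' {g | l2N g = 1}) := by
  have hsphere : {g : Fin n → ℝ | l2N g = 1} =
      WithLp.ofLp '' Metric.sphere (0 : EuclideanSpace ℝ (Fin n)) 1 := by
    ext g
    simp only [Set.mem_image, mem_sphere_zero_iff_norm, l2N_eq_norm]
    exact ⟨fun h => ⟨_, h, rfl⟩, by rintro ⟨y, hy, rfl⟩; exact hy⟩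
  have hcont : Continuous fun g : Fin n → ℝ => aN A ((A⁻¹ *ᵥ g) - P (A⁻¹ *ᵥ g)) := by
    unfold aN
    fun_prop
  rw [hsphere, Set.image_image]
  exact ((isCompact_sphere _ _).image (hcont.comp (PiLp.continuous_ofLp 2 _))).bddAbove

lemma etaK_nonneg : 0 ≤ etaK A P :=
  Real.sSup_nonneg (by rintro _ ⟨g, -, rfl⟩; exact aN_nonneg A _)

lemma aN_sub_le_etaK_mul_l2N (g : Fin n → ℝ) :
    aN A ((A⁻¹ *ᵥ g) - P (A⁻¹ *ᵥ g)) ≤ etaK A P * l2N g := by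
  rcases eq_or_ne g 0 with rfl | hg
  · simp [aN, l2N]
  have hpos : 0 < l2N g := by simpa [l2N_eq_norm] using hg
  have hunit : l2N ((l2N g)⁻¹ • g) = 1 := by
    rw [l2N_eq_norm, WithLp.toLp_smul, norm_smul, ← l2N_eq_norm, norm_inv,
      Real.norm_of_nonneg hpos.le, inv_mul_cancel₀ hpos.ne']
  have h := le_csSup (bddAbove_etaK_image A P) ⟨_, hunit, rfl⟩
  dsimp only at h
  rw [mulVec_smul, map_smul, ← smul_sub, aN_smul, abs_inv, abs_of_pos hpos,
    inv_mul_le_iff₀ hpos] at h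
  exact h.trans_eq (mul_comm _ _)

end Eta

section Galerkin

variable {n : ℕ}

structure IsGalerkinProjection (A : Matrix (Fin n) (Fin n) ℝ) (K : Submodule ℝ (Fin n → ℝ))
    (P : (Fin n → ℝ) →ₗ[ℝ] (Fin n → ℝ)) : Prop where
  mem : ∀ x, P x ∈ K
  dotProduct_mulVec : ∀ x, ∀ y ∈ K, (P x) ⬝ᵥ (A *ᵥ y) = x ⬝ᵥ (A *ᵥ y)

namespace IsGalerkinProjection

variable {A : Matrix (Fin n) (Fin n) ℝ} {K : Submodule ℝ (Fin n → ℝ)}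
  {P : (Fin n → ℝ) →ₗ[ℝ] (Fin n → ℝ)}

lemma sub_dotProduct_mulVec_eq_zero (hP : IsGalerkinProjection A K P) (x : Fin n → ℝ)
    {y : Fin n → ℝ} (hy : y ∈ K) : (x - P x) ⬝ᵥ (A *ᵥ y) = 0 := by
  rw [sub_dotProduct, hP.dotProduct_mulVec x y hy, sub_self]

lemma aN_sub_le (hP : IsGalerkinProjection A K P) (hA : A.PosSemidef) (x : Fin n → ℝ) :
    aN A (x - P x) ≤ aN A x := by
  refine le_of_sq_le_mul (aN_nonneg A x) ?_
  calc aN A (x - P x) ^ 2 = (x - P x) ⬝ᵥ (A *ᵥ x) := by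
        rw [aN_sq hA, mulVec_sub, dotProduct_sub,
          hP.sub_dotProduct_mulVec_eq_zero x (hP.mem x), sub_zero]
    _ ≤ aN A (x - P x) * aN A x := (le_abs_self _).trans (abs_dotProduct_mulVec_le hA _ _)

/-- Aubin–Nitsche duality: test `x - P x` against `A⁻¹ (x - P x)`. -/
lemma l2N_sub_le (hP : IsGalerkinProjection A K P) (hA : A.PosDef) (x : Fin n → ℝ) :
    l2N (x - P x) ≤ etaK A P * aN A x := by
  set r := x - P x
  set w := A⁻¹ *ᵥ r
  have hw : A *ᵥ w = r := by
    rw [mulVec_mulVec, mul_nonsing_inv _ hA.det_pos.ne'.isUnit, one_mulVec]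
  refine le_of_sq_le_mul (mul_nonneg (etaK_nonneg A P) (aN_nonneg A x)) ?_
  calc l2N r ^ 2 = r ⬝ᵥ r := l2N_sq r
    _ = r ⬝ᵥ (A *ᵥ (w - P w)) := by
        rw [mulVec_sub, dotProduct_sub r (A *ᵥ w), hw,
          hP.sub_dotProduct_mulVec_eq_zero x (hP.mem w), sub_zero]
    _ ≤ aN A r * aN A (w - P w) :=
        (le_abs_self _).trans (abs_dotProduct_mulVec_le hA.posSemidef _ _)
    _ ≤ aN A x * (etaK A P * l2N r) :=
        mul_le_mul (hP.aN_sub_le hA.posSemidef x) (aN_sub_le_etaK_mul_l2N A P r)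
          (aN_nonneg A _) (aN_nonneg A x)
    _ = l2N r * (etaK A P * aN A x) := by ring

end IsGalerkinProjection

end Galerkin

section Orthonormal

variable {R ι κ : Type*} [Field R] [Fintype ι] [Fintype κ] [DecidableEq κ]
  {A : Matrix ι ι R} {v : κ → ι → R}

lemma sum_smul_dotProduct_mulVec (hv : ∀ j k, v j ⬝ᵥ (A *ᵥ v k) = if j = k then 1 else 0)
    (g : κ → R) (k : κ) : (∑ j, g j • v j) ⬝ᵥ (A *ᵥ v k) = g k := by
  simp [sum_dotProduct, hv]

lemma linearIndependent_of_dotProduct_mulVec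
    (hv : ∀ j k, v j ⬝ᵥ (A *ᵥ v k) = if j = k then 1 else 0) : LinearIndependent R v :=
  Fintype.linearIndependent_iff.2 fun g hg k => by
    simpa [hg] using (sum_smul_dotProduct_mulVec hv g k).symm

lemma eq_sum_of_mem_span (hv : ∀ j k, v j ⬝ᵥ (A *ᵥ v k) = if j = k then 1 else 0) {x : ι → R}
    (hx : x ∈ Submodule.span R (Set.range v)) : x = ∑ j, (x ⬝ᵥ (A *ᵥ v j)) • v j := by
  obtain ⟨g, rfl⟩ := (Submodule.mem_span_range_iff_exists_fun R).1 hx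
  simp only [sum_smul_dotProduct_mulVec hv]

lemma span_range_eq_of_finrank_eq (hv : ∀ j k, v j ⬝ᵥ (A *ᵥ v k) = if j = k then 1 else 0)
    {K : Submodule R (ι → R)} (hvK : ∀ j, v j ∈ K) (hK : Module.finrank R K = Fintype.card κ) :
    Submodule.span R (Set.range v) = K :=
  Submodule.eq_of_le_of_finrank_le (Submodule.span_le.2 (Set.range_subset_iff.2 hvK)) <| by
    rw [hK, finrank_span_eq_card (linearIndependent_of_dotProduct_mulVec hv)]

end Orthonormal

section Bessel

variable {n : ℕ} {κ : Type*} [Fintype κ] [DecidableEq κ]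

lemma sum_sq_dotProduct_le {w : κ → Fin n → ℝ}
    (hw : ∀ j k, w j ⬝ᵥ w k = if j = k then 1 else 0) (x : Fin n → ℝ) :
    ∑ j, (x ⬝ᵥ w j) ^ 2 ≤ l2N x ^ 2 := by
  have hON : Orthonormal ℝ fun j => WithLp.toLp 2 (w j) := by
    rw [orthonormal_iff_ite]
    intro j k
    simpa [EuclideanSpace.inner_toLp_toLp, dotProduct_comm] using hw j k
  simpa [l2N_eq_norm, EuclideanSpace.inner_toLp_toLp] using
    hON.sum_inner_products_le (WithLp.toLp 2 x) (s := Finset.univ)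

lemma sum_abs_dotProduct_mul_le {w : κ → Fin n → ℝ}
    (hw : ∀ j k, w j ⬝ᵥ w k = if j = k then 1 else 0) (x y : Fin n → ℝ) :
    ∑ j, |x ⬝ᵥ w j| * |y ⬝ᵥ w j| ≤ l2N x * l2N y := by
  have hsqrt : ∀ z, √(∑ j, |z ⬝ᵥ w j| ^ 2) ≤ l2N z := fun z => by
    simpa only [sq_abs] using
      (Real.sqrt_le_sqrt (sum_sq_dotProduct_le hw z)).trans_eq (Real.sqrt_sq (l2N_nonneg z))
  exact (Real.sum_mul_le_sqrt_mul_sqrt _ _ _).trans <|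
    mul_le_mul (hsqrt x) (hsqrt y) (Real.sqrt_nonneg _) (l2N_nonneg x)

lemma sum_abs_dotProduct_mul_le_of_orthogonal {v : κ → Fin n → ℝ} {μ : κ → ℝ}
    (hμ : ∀ j, 0 < μ j) (hv : ∀ j k, v j ⬝ᵥ v k = if j = k then μ j else 0) {c : ℝ}
    (hc : 0 ≤ c) (hμc : ∀ j, μ j ≤ c) (x y : Fin n → ℝ) :
    ∑ j, |x ⬝ᵥ v j| * |y ⬝ᵥ v j| ≤ c * (l2N x * l2N y) := by
  set w : κ → Fin n → ℝ := fun j => (√(μ j))⁻¹ • v j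
  have hw : ∀ j k, w j ⬝ᵥ w k = if j = k then 1 else 0 := by
    intro j k
    simp only [w, smul_dotProduct, dotProduct_smul, smul_eq_mul, hv]
    split_ifs with hjk
    · subst hjk
      rw [← mul_assoc, ← mul_inv, Real.mul_self_sqrt (hμ j).le, inv_mul_cancel₀ (hμ j).ne']
    · simp
  have hvw : ∀ j, v j = √(μ j) • w j := fun j => by
    rw [smul_smul, mul_inv_cancel₀ (Real.sqrt_pos.2 (hμ j)).ne', one_smul]
  clear_value w
  calc ∑ j, |x ⬝ᵥ v j| * |y ⬝ᵥ v j| = ∑ j, μ j * (|x ⬝ᵥ w j| * |y ⬝ᵥ w j|) := by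
        refine Finset.sum_congr rfl fun j _ => ?_
        rw [hvw j, dotProduct_smul, dotProduct_smul, smul_eq_mul, smul_eq_mul, abs_mul, abs_mul,
          abs_of_nonneg (Real.sqrt_nonneg _)]
        linear_combination (|x ⬝ᵥ w j| * |y ⬝ᵥ w j|) * Real.mul_self_sqrt (hμ j).le
    _ ≤ ∑ j, c * (|x ⬝ᵥ w j| * |y ⬝ᵥ w j|) := by gcongr with j; exact hμc j
    _ ≤ c * (l2N x * l2N y) := by
        rw [← Finset.mul_sum]
        exact mul_le_mul_of_nonneg_left (sum_abs_dotProduct_mul_le hw x y) hc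

end Bessel

section Ritz

variable {n m : ℕ}

structure IsRitzBasis (A : Matrix (Fin n) (Fin n) ℝ) (K : Submodule ℝ (Fin n → ℝ))
    (tlam : Fin m → ℝ) (tu : Fin m → Fin n → ℝ) : Prop where
  mem : ∀ j, tu j ∈ K
  ritz : ∀ j, ∀ v ∈ K, ((A *ᵥ tu j) - tlam j • tu j) ⬝ᵥ v = 0
  orthonormal : ∀ i j, tu i ⬝ᵥ (A *ᵥ tu j) = if i = j then (1 : ℝ) else 0

namespace IsRitzBasis

variable {A : Matrix (Fin n) (Fin n) ℝ} {K : Submodule ℝ (Fin n → ℝ)}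
  {tlam : Fin m → ℝ} {tu : Fin m → Fin n → ℝ}

lemma dotProduct_mulVec (hR : IsRitzBasis A K tlam tu) {v : Fin n → ℝ} (hv : v ∈ K) (j : Fin m) :
    v ⬝ᵥ (A *ᵥ tu j) = tlam j * (v ⬝ᵥ tu j) := by
  have h := hR.ritz j v hv
  rw [sub_dotProduct, smul_dotProduct, smul_eq_mul, sub_eq_zero] at h
  rw [dotProduct_comm, h, dotProduct_comm]

lemma mul_dotProduct (hR : IsRitzBasis A K tlam tu) (j k : Fin m) :
    tlam k * (tu j ⬝ᵥ tu k) = if j = k then 1 else 0 := by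
  rw [← hR.dotProduct_mulVec (hR.mem j), hR.orthonormal]

lemma pos (hR : IsRitzBasis A K tlam tu) (j : Fin m) : 0 < tlam j := by
  have h := hR.mul_dotProduct j j
  rw [if_pos rfl] at h
  exact pos_of_mul_pos_left (h ▸ one_pos) (by simpa using dotProduct_star_self_nonneg (tu j))

lemma dotProduct (hR : IsRitzBasis A K tlam tu) (j k : Fin m) :
    tu j ⬝ᵥ tu k = if j = k then 1 / tlam j else 0 := by
  have h := hR.mul_dotProduct j k
  split_ifs at h ⊢ with hjk
  · subst hjk
    exact eq_one_div_of_mul_eq_one_right h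
  · exact (mul_eq_zero.1 h).resolve_left (hR.pos k).ne'

lemma sub_galerkin_dotProduct (hR : IsRitzBasis A K tlam tu)
    {P : (Fin n → ℝ) →ₗ[ℝ] (Fin n → ℝ)} (hP : IsGalerkinProjection A K P) (j : Fin m)
    (x : Fin n → ℝ) : (x - P x) ⬝ᵥ tu j = x ⬝ᵥ tu j - 1 / tlam j * (x ⬝ᵥ (A *ᵥ tu j)) := by
  rw [sub_dotProduct, ← hP.dotProduct_mulVec x _ (hR.mem j), hR.dotProduct_mulVec (hP.mem x),
    ← mul_assoc, one_div_mul_cancel (hR.pos j).ne', one_mul]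

lemma l2N_le_of_spectral_gap (hR : IsRitzBasis A K tlam tu) (hK : Module.finrank ℝ K = m)
    {P : (Fin n → ℝ) →ₗ[ℝ] (Fin n → ℝ)} (hP : IsGalerkinProjection A K P)
    {μ₁ : ℝ} (hμ₁ : 0 ≤ μ₁) (hμ : ∀ j, 1 / tlam j ≤ μ₁) {δ : ℝ} (hδ : 0 < δ) (x : Fin n → ℝ)
    (hgap : ∀ j, δ * |x ⬝ᵥ (A *ᵥ tu j)| ≤ |(x - P x) ⬝ᵥ tu j|) :
    l2N x ≤ (1 + μ₁ / δ) * l2N (x - P x) := by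
  have hPx : P x = ∑ j, (x ⬝ᵥ (A *ᵥ tu j)) • tu j := by
    have hmem : P x ∈ Submodule.span ℝ (Set.range tu) := by
      rw [span_range_eq_of_finrank_eq hR.orthonormal hR.mem (hK.trans (Fintype.card_fin m).symm)]
      exact hP.mem x
    rw [eq_sum_of_mem_span hR.orthonormal hmem]
    simp only [hP.dotProduct_mulVec x _ (hR.mem _)]
  have hcoef : ∀ j, x ⬝ᵥ (A *ᵥ tu j) * (x ⬝ᵥ tu j) ≤ |(x - P x) ⬝ᵥ tu j| / δ * |x ⬝ᵥ tu j| := by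
    intro j
    have ha : |x ⬝ᵥ (A *ᵥ tu j)| ≤ |(x - P x) ⬝ᵥ tu j| / δ :=
      (le_div_iff₀ hδ).2 ((mul_comm _ _).trans_le (hgap j))
    exact (le_abs_self _).trans ((abs_mul _ _).trans_le
      (mul_le_mul_of_nonneg_right ha (abs_nonneg _)))
  have hPx_le : x ⬝ᵥ P x ≤ μ₁ / δ * (l2N x * l2N (x - P x)) :=
    calc x ⬝ᵥ P x = ∑ j, x ⬝ᵥ (A *ᵥ tu j) * (x ⬝ᵥ tu j) := by
          simp only [hPx, dotProduct_sum, dotProduct_smul, smul_eq_mul]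
      _ ≤ ∑ j, |(x - P x) ⬝ᵥ tu j| / δ * |x ⬝ᵥ tu j| := Finset.sum_le_sum fun j _ => hcoef j
      _ = 1 / δ * ∑ j, |x ⬝ᵥ tu j| * |(x - P x) ⬝ᵥ tu j| := by
          rw [Finset.mul_sum]
          exact Finset.sum_congr rfl fun j _ => by ring
      _ ≤ 1 / δ * (μ₁ * (l2N x * l2N (x - P x))) := by
          gcongr
          exact sum_abs_dotProduct_mul_le_of_orthogonal (fun j => one_div_pos.2 (hR.pos j))
            hR.dotProduct hμ₁ hμ x (x - P x)
      _ = μ₁ / δ * (l2N x * l2N (x - P x)) := by ring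
  refine le_of_sq_le_mul (mul_nonneg (by positivity) (l2N_nonneg _)) ?_
  calc l2N x ^ 2 = x ⬝ᵥ (x - P x) + x ⬝ᵥ P x := by rw [l2N_sq, dotProduct_sub]; ring
    _ ≤ l2N x * l2N (x - P x) + μ₁ / δ * (l2N x * l2N (x - P x)) :=
        add_le_add ((le_abs_self _).trans (abs_dotProduct_le _ _)) hPx_le
    _ = l2N x * ((1 + μ₁ / δ) * l2N (x - P x)) := by ring

lemma gap_mul_abs_dotProduct_mulVec_le (hR : IsRitzBasis A K tlam tu) (hA : A.IsHermitian)
    {P : (Fin n → ℝ) →ₗ[ℝ] (Fin n → ℝ)} (hP : IsGalerkinProjection A K P)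
    {lam : ℝ} {u : Fin n → ℝ} (heig : A *ᵥ u = lam • u) (hlam : lam ≠ 0) {i : Fin m} {δ : ℝ}
    (hδ : ∀ j : Fin m, j ≠ i → δ ≤ |1 / tlam j - 1 / lam|) {w : Fin n → ℝ}
    (hw : w ∈ Submodule.span ℝ {tu i}) (hwi : w ⬝ᵥ (A *ᵥ tu i) = u ⬝ᵥ (A *ᵥ tu i)) (j : Fin m) :
    δ * |(u - w) ⬝ᵥ (A *ᵥ tu j)| ≤ |(u - w - P (u - w)) ⬝ᵥ tu j| := by
  rcases eq_or_ne j i with rfl | hji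
  · rw [sub_dotProduct, hwi, sub_self, abs_zero, mul_zero]
    exact abs_nonneg _
  obtain ⟨s, rfl⟩ := Submodule.mem_span_singleton.1 hw
  have hb : (u - s • tu i) ⬝ᵥ tu j = u ⬝ᵥ tu j := by
    rw [sub_dotProduct, smul_dotProduct, hR.dotProduct, if_neg hji.symm, smul_zero, sub_zero]
  have ha : (u - s • tu i) ⬝ᵥ (A *ᵥ tu j) = lam * (u ⬝ᵥ tu j) := by
    rw [sub_dotProduct, smul_dotProduct, hR.orthonormal, if_neg hji.symm, smul_zero, sub_zero,
      hA.dotProduct_mulVec_comm, heig, dotProduct_smul, smul_eq_mul, dotProduct_comm]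
  have hc : u ⬝ᵥ tu j - 1 / tlam j * (lam * (u ⬝ᵥ tu j)) =
      (1 / lam - 1 / tlam j) * (lam * (u ⬝ᵥ tu j)) := by
    field_simp
  rw [hR.sub_galerkin_dotProduct hP, hb, ha, hc, abs_mul (1 / lam - _), abs_sub_comm]
  exact mul_le_mul_of_nonneg_right (hδ j hji) (abs_nonneg _)

end IsRitzBasis

end Ritz

/-- `L²`-norm versus energy-norm error estimate for the subspace projection
method (second part of Theorem 3.1):
`‖u − E_m^{(i)} u‖₂ ≤ (1 + μ̃_1/δ_i) η_K ‖u − E_m^{(i)} u‖_A`. -/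
theorem stmt4 {n m : ℕ} (A : Matrix (Fin n) (Fin n) ℝ) (hA : A.PosDef)
    -- `K` is an `m`-dimensional subspace of `ℝⁿ`
    (K : Submodule ℝ (Fin n → ℝ)) (hK : Module.finrank ℝ K = m)
    -- `P` is the `A`-orthogonal (Galerkin) projection onto `K`
    (P : (Fin n → ℝ) →ₗ[ℝ] (Fin n → ℝ))
    (hPmem : ∀ x, P x ∈ K)
    (hPproj : ∀ x, ∀ y ∈ K, (P x) ⬝ᵥ (A *ᵥ y) = x ⬝ᵥ (A *ᵥ y))
    -- the Ritz pairs `(λ̃_j, ũ_j)` of `A` on `K`, with `A`-orthonormal Ritz vectors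
    (tlam : Fin m → ℝ) (tu : Fin m → (Fin n → ℝ)) (htmono : Monotone tlam)
    (htu : ∀ j, tu j ∈ K)
    (hRitz : ∀ j, ∀ v ∈ K, ((A *ᵥ tu j) - tlam j • tu j) ⬝ᵥ v = 0)
    (htortho : ∀ i j, tu i ⬝ᵥ (A *ᵥ tu j) = if i = j then (1 : ℝ) else 0)
    -- `(λ, u)` is an exact eigenpair of `A`
    (lam : ℝ) (u : Fin n → ℝ) (hu : u ≠ 0) (heig : A *ᵥ u = lam • u)
    -- `δ_i > 0` is (a lower bound for) `min_{j ≠ i} |μ̃_j − μ|` where `μ = 1/λ`, `μ̃_j = 1/λ̃_j`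
    (i : Fin m) (δ : ℝ) (hδpos : 0 < δ)
    (hδ : ∀ j : Fin m, j ≠ i → δ ≤ |1 / tlam j - 1 / lam|)
    -- `E` is the `A`-orthogonal projection `E_m^{(i)}` onto `span{ũ_i}`
    (E : (Fin n → ℝ) →ₗ[ℝ] (Fin n → ℝ))
    (hEmem : ∀ x, E x ∈ Submodule.span ℝ {tu i})
    (hEproj : ∀ x, ∀ y ∈ Submodule.span ℝ {tu i},
      (E x) ⬝ᵥ (A *ᵥ y) = x ⬝ᵥ (A *ᵥ y)) :
    l2N (u - E u) ≤
      (1 + (1 / tlam ⟨0, i.pos⟩) / δ) * etaK A P * aN A (u - E u) := by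
  have hP : IsGalerkinProjection A K P := ⟨hPmem, hPproj⟩
  have hR : IsRitzBasis A K tlam tu := ⟨htu, hRitz, htortho⟩
  set μ₁ := 1 / tlam ⟨0, i.pos⟩
  have hμ₁ : 0 < μ₁ := one_div_pos.2 (hR.pos _)
  have hμ : ∀ j, 1 / tlam j ≤ μ₁ := fun j =>
    one_div_le_one_div_of_le (hR.pos _) (htmono (Nat.zero_le j.val))
  have hlam : lam ≠ 0 := by
    rintro rfl
    simpa [heig] using hA.dotProduct_mulVec_pos hu
  have hgap := hR.gap_mul_abs_dotProduct_mulVec_le hA.1 hP heig hlam hδ (hEmem u)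
    (hEproj u _ (Submodule.mem_span_singleton_self _))
  calc l2N (u - E u) ≤ (1 + μ₁ / δ) * l2N (u - E u - P (u - E u)) :=
        hR.l2N_le_of_spectral_gap hK hP hμ₁.le hμ hδpos _ hgap
    _ ≤ (1 + μ₁ / δ) * (etaK A P * aN A (u - E u)) := by
        gcongr
        exact hP.l2N_sub_le hA _
    _ = (1 + μ₁ / δ) * etaK A P * aN A (u - E u) := by ring
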